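/- arXiv:2507.06792 — 9 statements merged into one kernel-verified Lean document; each statement's English description precedes it below -/
import Mathlib

section
/- Let G₁ and G₂ be topological groups acting continuously on a Hausdorff topological space N, with the two actions commuting (so that (g₁,g₂) • n := g₁ • (g₂ • n) defines a continuous action of G₁ × G₂ on N). Assume the combined G₁ × G₂-action is proper, i.e. for every compact set L ⊆ N the set {(g₁,g₂) ∈ G₁ × G₂ : ((g₁,g₂) • L) ∩ L ≠ ∅} is compact. Then the induced G₁-action on the orbit space N/G₂ is proper, in the sense that for every compact set K ⊆ N the set {g₁ ∈ G₁ : (g₁ • (G₂ • K)) ∩ (G₂ • K) ≠ ∅} is contained in a compact subset of G₁. -/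
/-- If two commuting continuous actions of `G₁` and `G₂` on a Hausdorff space `N` combine to a
proper action of `G₁ × G₂` (in the sense that all return sets of compact sets are compact),
then the induced `G₁`-action on the orbit space `N/G₂` is proper: the return set of the
`G₂`-saturation of any compact set `K ⊆ N` is contained in a compact subset of `G₁`. -/
theorem suspension_quotient_action_proper
    {G₁ G₂ N : Type*} [Group G₁] [Group G₂]
    [TopologicalSpace G₁] [TopologicalSpace G₂]
    [IsTopologicalGroup G₁] [IsTopologicalGroup G₂]
    [TopologicalSpace N] [T2Space N]
    [MulAction G₁ N] [MulAction G₂ N]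
    [ContinuousSMul G₁ N] [ContinuousSMul G₂ N]
    (hcomm : ∀ (g₁ : G₁) (g₂ : G₂) (n : N), g₁ • g₂ • n = g₂ • g₁ • n)
    (hproper : ∀ L : Set N, IsCompact L →
      IsCompact {p : G₁ × G₂ | ∃ x ∈ L, p.1 • p.2 • x ∈ L})
    (K : Set N) (hK : IsCompact K) :
    ∃ C : Set G₁, IsCompact C ∧
      {g₁ : G₁ | ∃ x ∈ {n : N | ∃ g₂ : G₂, ∃ k ∈ K, n = g₂ • k},
        g₁ • x ∈ {n : N | ∃ g₂ : G₂, ∃ k ∈ K, n = g₂ • k}} ⊆ C := by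
  refine ⟨Prod.fst '' {p : G₁ × G₂ | ∃ x ∈ K, p.1 • p.2 • x ∈ K},
    ((hproper K hK).image continuous_fst), ?_⟩
  rintro g₁ ⟨x, ⟨g₂, k, hk, rfl⟩, g₂', k', hk', hx⟩
  refine ⟨(g₁, g₂'⁻¹ * g₂), ⟨k, hk, ?_⟩, rfl⟩
  have : g₁ • (g₂'⁻¹ * g₂) • k = g₂'⁻¹ • (g₁ • g₂ • k) := by
    rw [mul_smul, hcomm]
  rw [this, hx, inv_smul_smul]
  exact hk'
end

section
/- Let G₁ and G₂ be Hausdorff topological groups, and let M₁ and M₂ be Hausdorff topological spaces. Suppose G₁ acts continuously and properly on M₁ (i.e. {g₁ : (g₁ • K₁) ∩ K₁ ≠ ∅} is compact for every compact K₁ ⊆ M₁), G₂ acts continuously and properly on M₂, and G₂ also acts continuously on M₁ with this action commuting with the G₁-action. Define the twisted product action of G₁ × G₂ on M₁ × M₂ by (g₁,g₂) • (m₁,m₂) = (g₁ • (g₂ • m₁), g₂ • m₂). Then the twisted product action is proper: for every compact set K ⊆ M₁ × M₂, the set {(g₁,g₂) ∈ G₁ × G₂ : ((g₁,g₂) • K)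 ∩ K ≠ ∅} is compact. -/
/-- The twisted product action `(g₁,g₂) • (m₁,m₂) = (g₁ • g₂ • m₁, g₂ • m₂)` of `G₁ × G₂` on
`M₁ × M₂` is proper, provided `G₁` acts properly on `M₁`, `G₂` acts properly on `M₂`, and `G₂`
acts continuously on `M₁` commuting with the `G₁`-action. -/
theorem twisted_product_action_proper
    {G₁ G₂ M₁ M₂ : Type*} [Group G₁] [Group G₂]
    [TopologicalSpace G₁] [TopologicalSpace G₂]
    [IsTopologicalGroup G₁] [IsTopologicalGroup G₂]
    [T2Space G₁] [T2Space G₂]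
    [TopologicalSpace M₁] [TopologicalSpace M₂] [T2Space M₁] [T2Space M₂]
    [MulAction G₁ M₁] [MulAction G₂ M₂] [MulAction G₂ M₁]
    [ContinuousSMul G₁ M₁] [ContinuousSMul G₂ M₂] [ContinuousSMul G₂ M₁]
    (hcomm : ∀ (g₁ : G₁) (g₂ : G₂) (m : M₁), g₁ • g₂ • m = g₂ • g₁ • m)
    (hproper₁ : ∀ K₁ : Set M₁, IsCompact K₁ → IsCompact {g₁ : G₁ | ∃ x ∈ K₁, g₁ • x ∈ K₁})
    (hproper₂ : ∀ K₂ : Set M₂, IsCompact K₂ → IsCompact {g₂ : G₂ | ∃ x ∈ K₂, g₂ • x ∈ K₂})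
    (K : Set (M₁ × M₂)) (hK : IsCompact K) :
    IsCompact {p : G₁ × G₂ | ∃ m ∈ K, (p.1 • p.2 • m.1, p.2 • m.2) ∈ K} := by
  set K₁ : Set M₁ := Prod.fst '' K with hK₁def
  set K₂ : Set M₂ := Prod.snd '' K with hK₂def
  have hK₁ : IsCompact K₁ := hK.image continuous_fst
  have hK₂ : IsCompact K₂ := hK.image continuous_snd
  set H₂ : Set G₂ := {g₂ : G₂ | ∃ x ∈ K₂, g₂ • x ∈ K₂} with hH₂def
  have hH₂ : IsCompact H₂ := hproper₂ K₂ hK₂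
  -- L = K₁ ∪ H₂ • K₁
  set L : Set M₁ := K₁ ∪ ((fun q : G₂ × M₁ => q.1 • q.2) '' H₂ ×ˢ K₁) with hLdef
  have hL : IsCompact L :=
    hK₁.union ((hH₂.prod hK₁).image continuous_smul)
  set H₁ : Set G₁ := {g₁ : G₁ | ∃ x ∈ L, g₁ • x ∈ L} with hH₁def
  have hH₁ : IsCompact H₁ := hproper₁ L hL
  -- closed set C
  set C : Set ((G₁ × G₂) × (M₁ × M₂)) :=
    {q | q.2 ∈ K ∧ (q.1.1 • q.1.2 • q.2.1, q.1.2 • q.2.2) ∈ K} with hCdef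
  have hCclosed : IsClosed C := by
    have hKcl : IsClosed K := hK.isClosed
    refine IsClosed.inter (hKcl.preimage continuous_snd) (hKcl.preimage ?_)
    fun_prop
  have hcompact : IsCompact ((H₁ ×ˢ H₂) ×ˢ K ∩ C) :=
    ((hH₁.prod hH₂).prod hK).inter_right hCclosed
  have himg : IsCompact (Prod.fst '' ((H₁ ×ˢ H₂) ×ˢ K ∩ C)) :=
    hcompact.image continuous_fst
  convert himg using 1
  ext p
  constructor
  · rintro ⟨m, hm, hm'⟩
    refine ⟨(p, m), ⟨⟨⟨?_, ?_⟩, hm⟩, hm, hm'⟩, rfl⟩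
    · -- p.1 ∈ H₁
      refine ⟨p.2 • m.1, Or.inr ⟨(p.2, m.1), ⟨⟨m.2, ⟨m, hm, rfl⟩, ⟨_, hm', rfl⟩⟩, ⟨m, hm, rfl⟩⟩, rfl⟩, ?_⟩
      exact Or.inl ⟨_, hm', rfl⟩
    · -- p.2 ∈ H₂
      exact ⟨m.2, ⟨m, hm, rfl⟩, ⟨_, hm', rfl⟩⟩
  · rintro ⟨⟨q, m⟩, ⟨-, hm, hm'⟩, rfl⟩
    exact ⟨m, hm, hm'⟩
end

section
/- Let G be a Hausdorff topological group acting continuously and properly on a Hausdorff topological space M (properly meaning {h ∈ G : (h • K) ∩ K ≠ ∅} is compact for every compact K ⊆ M). Let φ be a (continuous) flow of ℝ on M that is G-equivariant: φ_t(h • x) = h • φ_t(x) for all t ∈ ℝ, h ∈ G, x ∈ M. Suppose x ∈ M, g ∈ G and l ∈ ℝ satisfy φ_l(x) = g • x, and suppose the flow curve through x is periodic, i.e. there exists p ≠ 0 with φ_p(x) = x. Then the closure of the cyclic subgroup {gᵏ : k ∈ ℤ} generated by g is a compact subset of G. -/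
/-- If a `G`-equivariant flow `φ` on a space `M` with a proper `G`-action has a periodic flow
curve through a point `x` with `φ l x = g • x`, then the closure of the cyclic subgroup
generated by `g` is compact. -/
theorem closure_zpowers_isCompact_of_periodic_flow_curve
    {G M : Type*} [Group G] [TopologicalSpace G] [IsTopologicalGroup G] [T2Space G]
    [TopologicalSpace M] [T2Space M] [MulAction G M] [ContinuousSMul G M]
    (hproper : ∀ K : Set M, IsCompact K → IsCompact {h : G | ∃ x ∈ K, h • x ∈ K})
    (φ : ℝ → M → M)
    (hφcont : Continuous fun q : ℝ × M => φ q.1 q.2)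
    (hφ0 : φ 0 = id)
    (hφadd : ∀ s t : ℝ, φ (s + t) = φ s ∘ φ t)
    (hequiv : ∀ (t : ℝ) (h : G) (x : M), φ t (h • x) = h • φ t x)
    (x : M) (g : G) (l : ℝ) (hgl : φ l x = g • x)
    (p : ℝ) (hp : p ≠ 0) (hper : φ p x = x) :
    IsCompact (closure ((Subgroup.zpowers g : Set G))) := by
  have hf : Continuous fun t : ℝ => φ t x :=
    hφcont.comp (continuous_id.prodMk continuous_const)
  have hper' : Function.Periodic (fun t : ℝ => φ t x) p := by
    intro t
    simp only
    rw [hφadd t p, Function.comp_apply, hper]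
  have habs : Function.Periodic (fun t : ℝ => φ t x) |p| := by
    rcases abs_choice p with h | h
    · rw [h]; exact hper'
    · rw [h]; exact hper'.neg
  have hpos : 0 < |p| := abs_pos.mpr hp
  set K : Set M := (fun t : ℝ => φ t x) '' Set.Icc 0 |p| with hKdef
  have hK : IsCompact K := isCompact_Icc.image hf
  have hxK : x ∈ K := ⟨0, ⟨le_refl 0, hpos.le⟩, by simp [hφ0]⟩
  have hn : ∀ n : ℕ, g ^ n • x = φ ((n : ℝ) * l) x := by
    intro n
    induction n with
    | zero => simp [hφ0]
    | succ n ih =>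
      have h1 : ((n + 1 : ℕ) : ℝ) * l = l + (n : ℝ) * l := by push_cast; ring
      rw [h1, hφadd, Function.comp_apply, ← ih, hequiv, hgl, ← mul_smul, ← pow_succ]
  have hpow : ∀ k : ℤ, g ^ k • x = φ ((k : ℝ) * l) x := by
    intro k
    rcases k with n | n
    · simpa using hn n
    · have hne : φ ((n + 1 : ℕ) * l) x = g ^ (n + 1 : ℕ) • x := (hn (n + 1)).symm
      have key : φ (-(((n + 1 : ℕ) : ℝ) * l)) (φ (((n + 1 : ℕ) : ℝ) * l) x) = x := by
        rw [← Function.comp_apply (f := φ _) (g := φ _), ← hφadd, neg_add_cancel, hφ0, id]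
      rw [hne, hequiv] at key
      have : φ (-(((n + 1 : ℕ) : ℝ) * l)) x = (g ^ (n + 1 : ℕ))⁻¹ • x := by
        rw [eq_inv_smul_iff]; exact key
      rw [show ((Int.negSucc n : ℝ)) * l = -(((n + 1 : ℕ) : ℝ) * l) by push_cast [Int.negSucc_eq]; ring,
        this, zpow_negSucc]
  have hsub : (Subgroup.zpowers g : Set G) ⊆ {h : G | ∃ y ∈ K, h • y ∈ K} := by
    rintro h ⟨k, rfl⟩
    refine ⟨x, hxK, ?_⟩
    rw [hpow k]
    obtain ⟨s, hs, hfs⟩ := habs.exists_mem_Ico₀ hpos ((k : ℝ) * l)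
    exact ⟨s, Set.mem_Icc_of_Ico hs, hfs.symm⟩
  have hS := hproper K hK
  exact hS.of_isClosed_subset isClosed_closure (closure_minimal hsub hS.isClosed)
end

section
/- Let G be a group acting by isometries on a metric space M, and let l : G → ℝ be a nonnegative function satisfying l(xy) ≤ l(x) + l(y) and l(x⁻¹) = l(x) for all x, y ∈ G. Let g ∈ G, let K ⊆ M and S ⊆ M be compact sets, and suppose there exist constants a > 0 and b ≥ 0 such that d(x • m, m) ≥ a·l(x) − b for all x ∈ G and all m ∈ g • K. Then there exists r₀ ≥ 0 such that for all h ∈ G and k ∈ K: if h • (g • k) ∈ S, then l(h g h⁻¹) ≤ r₀. -/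
/-- If `G` acts by isometries on a metric space `M`, `l` is a subadditive symmetric nonnegative
length function on `G` satisfying a lower displacement bound `d(x • m, m) ≥ a l(x) - b` for
`m ∈ g • K`, then the conjugates `h g h⁻¹` with `h • (g • k) ∈ S` for some `k ∈ K` have
uniformly bounded length. -/
theorem length_of_conjugates_bounded_on_support
    {G M : Type*} [Group G] [MetricSpace M] [MulAction G M]
    (hiso : ∀ (h : G) (m m' : M), dist (h • m) (h • m') = dist m m')
    (l : G → ℝ) (hl0 : ∀ x, 0 ≤ l x)
    (hsub : ∀ x y : G, l (x * y) ≤ l x + l y)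
    (hsymm : ∀ x : G, l x⁻¹ = l x)
    (g : G) (K S : Set M) (hK : IsCompact K) (hS : IsCompact S)
    (a b : ℝ) (ha : 0 < a) (hb : 0 ≤ b)
    (hlow : ∀ (x : G) (m : M), m ∈ (fun k => g • k) '' K → a * l x - b ≤ dist (x • m) m) :
    ∃ r₀ : ℝ, 0 ≤ r₀ ∧
      ∀ (h : G) (k : M), k ∈ K → h • (g • k) ∈ S → l (h * g * h⁻¹) ≤ r₀ := by
  have hgK : IsCompact ((fun k => g • k) '' K) := by
    refine hK.image ?_
    exact (Isometry.continuous (fun m m' => by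
      rw [edist_dist, edist_dist, hiso]))
  have hbd := (hS.isBounded.union hgK.isBounded)
  rw [Metric.isBounded_iff] at hbd
  obtain ⟨C, hC⟩ := hbd
  refine ⟨2 * ((b + max C 0) / a) + l g, ?_, ?_⟩
  · have : 0 ≤ (b + max C 0) / a :=
      div_nonneg (by positivity) ha.le
    nlinarith [hl0 g]
  · intro h k hk hmem
    set m := g • k with hm
    have hmK : m ∈ (fun k => g • k) '' K := ⟨k, hk, rfl⟩
    have hd : dist (h • m) m ≤ max C 0 :=
      le_trans (hC (Or.inl hmem) (Or.inr hmK)) (le_max_left _ _)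
    have h1 : a * l h - b ≤ max C 0 := le_trans (hlow h m hmK) hd
    have hlh : l h ≤ (b + max C 0) / a := by
      rw [le_div_iff₀ ha]
      linarith [mul_comm a (l h)]
    have : l (h * g * h⁻¹) ≤ l h + l g + l h⁻¹ :=
      le_trans (hsub _ _) (by linarith [hsub h g])
    rw [hsymm] at this
    linarith
end

section
/- Let G be a Hausdorff topological group acting continuously and properly on a Hausdorff topological space Y (properly meaning {h ∈ G : (h • K) ∩ K ≠ ∅} is compact for every compact K ⊆ Y). Let e : Y ≃ Y be a bijection with e(h • x) = h • e(x) for all h ∈ G, x ∈ Y. Suppose g ∈ G, n ∈ ℤ and y ∈ Y satisfy eⁿ(y) = g • y, and suppose the orbit {eᵏ(y) : k ∈ ℤ} is finite. Then the closure of the cyclic subgroup {gᵏ : k ∈ ℤ} generated by g is a compact subset of G. -/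
/-- If `G` acts properly on `Y`, `e` is a `G`-equivariant bijection of `Y`, and there are
`y ∈ Y`, `n ∈ ℤ` with `eⁿ y = g • y` whose `e`-orbit `{eᵏ y : k ∈ ℤ}` is finite, then the
closure of the cyclic subgroup generated by `g` is compact. -/
theorem closure_zpowers_isCompact_of_finite_orbit
    {Y G : Type*} [Group G] [TopologicalSpace G] [IsTopologicalGroup G] [T2Space G]
    [TopologicalSpace Y] [T2Space Y] [MulAction G Y] [ContinuousSMul G Y]
    (hproper : ∀ K : Set Y, IsCompact K → IsCompact {h : G | ∃ x ∈ K, h • x ∈ K})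
    (e : Equiv.Perm Y) (hequiv : ∀ (h : G) (x : Y), e (h • x) = h • e x)
    (g : G) (n : ℤ) (y : Y) (hy : (e ^ n) y = g • y)
    (horb : {x : Y | ∃ k : ℤ, (e ^ k) y = x}.Finite) :
    IsCompact (closure ((Subgroup.zpowers g : Set G))) := by
  -- equivariance of natural powers
  have hnat : ∀ (m : ℕ) (h : G) (x : Y), (e ^ m) (h • x) = h • (e ^ m) x := by
    intro m
    induction m with
    | zero => intro h x; simp
    | succ m ih =>
      intro h x
      rw [pow_succ, Equiv.Perm.mul_apply, Equiv.Perm.mul_apply, hequiv, ih]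
  -- equivariance of integer powers
  have hint : ∀ (m : ℤ) (h : G) (x : Y), (e ^ m) (h • x) = h • (e ^ m) x := by
    intro m h x
    rcases m with m | m
    · simpa using hnat m h x
    · have : (e ^ (Int.negSucc m)) = (e ^ (m + 1))⁻¹ := by
        rw [zpow_negSucc]
      rw [this]
      have := hnat (m + 1) h ((e ^ (m + 1))⁻¹ (h • x))
      apply (e ^ (m + 1)).injective
      rw [Equiv.Perm.coe_inv, Equiv.apply_symm_apply, hnat, Equiv.apply_symm_apply]
  -- key computation
  have key : ∀ k : ℤ, (e ^ (n * k)) y = g ^ k • y := by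
    intro k
    induction k using Int.induction_on with
    | zero => simp
    | succ k ih =>
      have : (n * (k + 1) : ℤ) = n * k + n := by ring
      rw [this, zpow_add, Equiv.Perm.mul_apply, hy, hint, ih, smul_smul, ← zpow_one_add,
        add_comm]
    | pred k ih =>
      have h1 : (n * (-k) : ℤ) = n * (-k - 1) + n := by ring
      rw [h1, zpow_add, Equiv.Perm.mul_apply, hy, hint] at ih
      have h2 := congrArg (fun z => g⁻¹ • z) ih
      simp only [inv_smul_smul] at h2
      rw [h2, smul_smul]
      congr 1
      group
  -- the orbit is compact
  set K := {x : Y | ∃ k : ℤ, (e ^ k) y = x} with hK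
  have hKc : IsCompact K := horb.isCompact
  have hS : IsCompact {h : G | ∃ x ∈ K, h • x ∈ K} := hproper K hKc
  have hsub : (Subgroup.zpowers g : Set G) ⊆ {h : G | ∃ x ∈ K, h • x ∈ K} := by
    rintro h ⟨k, rfl⟩
    exact ⟨y, ⟨0, by simp⟩, ⟨n * k, key k⟩⟩
  exact hS.of_isClosed_subset isClosed_closure
    (closure_minimal hsub hS.isClosed)
end

section
/- Let G be a topological group acting continuously on a Hausdorff topological space Y, and let e : Y → Y be a homeomorphism with e(h • x) = h • e(x) for all h ∈ G, x ∈ Y. Let g ∈ G be such that the closure of {gᵏ : k ∈ ℤ} in G is compact, and let n ∈ ℤ with n ≠ 0. Suppose the fixed-point set F := {x ∈ Y : g⁻¹ • eⁿ(x) = x} is discrete in the subspace topology. Then for every y ∈ F the orbit {eᵏ(y) : k ∈ ℤ} is finite. (Hence the fibres of the component map of the suspension are finite whenever g lies in a compact subgroup of G.) -/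
/-- Suppose `G` acts continuously on a Hausdorff space `Y`, `e` is a `G`-equivariant
homeomorphism of `Y`, the closure of the cyclic subgroup generated by `g` is compact, and for
some `n ≠ 0` the fixed-point set `F = {x | g⁻¹ • eⁿ x = x}` is discrete. Then the `e`-orbit of
every point of `F` is finite. -/
theorem orbit_finite_of_compact_closure_zpowers
    {Y G : Type*} [Group G] [TopologicalSpace G] [IsTopologicalGroup G]
    [TopologicalSpace Y] [T2Space Y] [MulAction G Y] [ContinuousSMul G Y]
    (e : Equiv.Perm Y) (he : Continuous e) (he' : Continuous e.symm)
    (hequiv : ∀ (h : G) (x : Y), e (h • x) = h • e x)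
    (g : G) (hg : IsCompact (closure ((Subgroup.zpowers g : Set G))))
    (n : ℤ) (hn : n ≠ 0)
    (hdisc : DiscreteTopology {x : Y | g⁻¹ • (e ^ n) x = x}) :
    ∀ y ∈ {x : Y | g⁻¹ • (e ^ n) x = x}, {x : Y | ∃ k : ℤ, (e ^ k) y = x}.Finite := by
  intro y hy
  set F : Set Y := {x : Y | g⁻¹ • (e ^ n) x = x} with hFdef
  -- continuity of natural powers
  have contpow : ∀ (m : ℕ) (f : Equiv.Perm Y), Continuous f → Continuous ⇑(f ^ m) := by
    intro m f hf
    induction m with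
    | zero => simpa using continuous_id
    | succ m ih =>
      have h1 : ⇑(f ^ (m + 1)) = ⇑(f ^ m) ∘ f := by
        ext x; simp [pow_succ, Equiv.Perm.mul_apply]
      rw [h1]; exact ih.comp hf
  -- continuity of integer powers
  have contzpow : ∀ k : ℤ, Continuous ⇑(e ^ k) := by
    intro k
    cases k with
    | ofNat m => rw [Int.ofNat_eq_coe, zpow_natCast]; exact contpow m e he
    | negSucc m =>
      rw [zpow_negSucc, ← inv_pow]
      refine contpow (m + 1) e⁻¹ ?_
      have : ⇑(e⁻¹) = ⇑(e.symm) := rfl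
      rw [this]; exact he'
  -- equivariance of nat powers of an equivariant perm
  have hpowequiv : ∀ (f : Equiv.Perm Y), (∀ (h : G) (x : Y), f (h • x) = h • f x) →
      ∀ (m : ℕ) (h : G) (x : Y), (f ^ m) (h • x) = h • (f ^ m) x := by
    intro f hf m
    induction m with
    | zero => intro h x; simp
    | succ m ih =>
      intro h x
      have h1 : ∀ z, (f ^ (m + 1)) z = (f ^ m) (f z) := by
        intro z; simp [pow_succ, Equiv.Perm.mul_apply]
      rw [h1, h1, hf, ih]
  -- equivariance of the inverse
  have hinvequiv : ∀ (h : G) (x : Y), e⁻¹ (h • x) = h • e⁻¹ x := by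
    intro h x
    apply e.injective
    have : ∀ z, e (e⁻¹ z) = z := fun z => e.apply_symm_apply z
    rw [this, hequiv, this]
  -- equivariance of integer powers
  have hequivZ : ∀ (k : ℤ) (h : G) (x : Y), (e ^ k) (h • x) = h • (e ^ k) x := by
    intro k
    cases k with
    | ofNat m => rw [Int.ofNat_eq_coe, zpow_natCast]; exact hpowequiv e hequiv m
    | negSucc m => rw [zpow_negSucc, ← inv_pow]; exact hpowequiv e⁻¹ hinvequiv (m + 1)
  -- the orbit stays in F
  have horbF : ∀ k : ℤ, (e ^ k) y ∈ F := by
    intro k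
    show g⁻¹ • (e ^ n) ((e ^ k) y) = (e ^ k) y
    have hcomm : (e ^ n) ((e ^ k) y) = (e ^ k) ((e ^ n) y) := by
      rw [← Equiv.Perm.mul_apply, ← Equiv.Perm.mul_apply, ← zpow_add, ← zpow_add, add_comm]
    rw [hcomm, ← hequivZ k g⁻¹ _, hy]
  -- key equation: e^n y = g • y
  have hgy : (e ^ n) y = g • y := by
    have h0 : g⁻¹ • (e ^ n) y = y := hy
    exact inv_smul_eq_iff.mp h0
  have hgy' : (e ^ (-n)) y = g⁻¹ • y := by
    have h1 : (e ^ (-n)) ((e ^ n) y) = y := by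
      rw [← Equiv.Perm.mul_apply, ← zpow_add, neg_add_cancel]; simp
    rw [hgy, hequivZ] at h1
    exact eq_inv_smul_iff.mpr h1
  -- e^(n*q) y = g^q • y
  have hmul : ∀ q : ℤ, (e ^ (n * q)) y = g ^ q • y := by
    intro q
    induction q using Int.induction_on with
    | zero => simp
    | succ q ih =>
      have h1 : (e ^ (n * (q + 1))) y = (e ^ (n * q)) ((e ^ n) y) := by
        rw [← Equiv.Perm.mul_apply, ← zpow_add, mul_add, mul_one]
      rw [h1, hgy, hequivZ, ih, smul_smul]
      congr 1
      rw [← zpow_one_add]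
      congr 1
      ring
    | pred q ih =>
      have h1 : (e ^ (n * (-q - 1))) y = (e ^ (n * (-q))) ((e ^ (-n)) y) := by
        rw [← Equiv.Perm.mul_apply, ← zpow_add]
        ring_nf
      rw [h1, hgy', hequivZ, ih, smul_smul]
      congr 1
      rw [← zpow_neg_one, ← zpow_add]
      congr 1
      ring
  -- the finite set of remainders
  set S : Set Y := (fun r : ℤ => (e ^ r) y) '' (Set.Ico 0 |n|) with hSdef
  have hSfin : S.Finite := (Set.finite_Ico 0 |n|).image _
  -- the compact set
  set T : Set Y := (fun p : G × Y => p.1 • p.2) '' ((closure ((Subgroup.zpowers g : Set G))) ×ˢ S)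
    with hTdef
  have hTcpt : IsCompact T := (hg.prod hSfin.isCompact).image continuous_smul
  -- the orbit lies in T
  have horbT : ∀ k : ℤ, (e ^ k) y ∈ T := by
    intro k
    have hmod := Int.emod_emod_of_dvd k (dvd_refl n)
    have hknr : k = k % n + n * (k / n) := by
      have := Int.mul_ediv_add_emod k n
      omega
    have h1 : (e ^ k) y = (e ^ (k % n)) ((e ^ (n * (k / n))) y) := by
      rw [← Equiv.Perm.mul_apply, ← zpow_add, ← hknr]
    have h2 : (e ^ k) y = g ^ (k / n) • (e ^ (k % n)) y := by
      rw [h1, hmul, hequivZ]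
    rw [h2]
    refine ⟨(g ^ (k / n), (e ^ (k % n)) y), ⟨?_, ?_⟩, rfl⟩
    · exact subset_closure ((Subgroup.zpowers g).zpow_mem (Subgroup.mem_zpowers g) (k / n))
    · exact ⟨k % n, ⟨Int.emod_nonneg k hn, Int.emod_lt_abs k hn⟩, rfl⟩
  -- F is closed
  have hFclosed : IsClosed F := by
    have hc : Continuous fun x : Y => g⁻¹ • (e ^ n) x := (contzpow n).const_smul g⁻¹
    exact isClosed_eq hc continuous_id
  -- F ∩ T is compact and discrete, hence finite
  have hcpt : IsCompact (F ∩ T) := hTcpt.inter_left hFclosed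
  have hdisc' : DiscreteTopology (F ∩ T : Set Y) :=
    DiscreteTopology.of_subset hdisc Set.inter_subset_left
  have hfin : (F ∩ T).Finite := hcpt.finite ⟨hdisc'⟩
  refine hfin.subset ?_
  rintro x ⟨k, rfl⟩
  exact ⟨horbF k, horbT k⟩
end

section
/- Let G be a Hausdorff topological group acting continuously on a Hausdorff topological space Y, and let e : Y → Y be a homeomorphism with e(h • x) = h • e(x) for all h ∈ G, x ∈ Y. Let g ∈ G be such that the closure of {gᵏ : k ∈ ℤ} in G is compact, let n ∈ ℤ with n ≠ 0, and suppose the fixed-point set F := {x ∈ Y : g⁻¹ • eⁿ(x) = x} is discrete in the subspace topology. Then for every compact subset A ⊆ G and every compact subset S ⊆ Y, the set {y ∈ F : ∃ a ∈ A, ∃ k ∈ ℤ, a • eᵏ(y) ∈ S} is finite. -/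
open Pointwise


/-- Suppose `G` is a Hausdorff topological group acting continuously on a Hausdorff space `Y`,
`e` is a `G`-equivariant homeomorphism of `Y`, the closure of the cyclic subgroup generated by
`g` is compact, and for some `n ≠ 0` the fixed-point set `F = {x | g⁻¹ • eⁿ x = x}` is
discrete. Then for all compact `A ⊆ G` and `S ⊆ Y`, the set of points `y ∈ F` with
`a • eᵏ y ∈ S` for some `a ∈ A` and `k ∈ ℤ` is finite. -/
theorem fixed_points_meeting_support_finite
    {Y G : Type*} [Group G] [TopologicalSpace G] [IsTopologicalGroup G] [T2Space G]
    [TopologicalSpace Y] [T2Space Y] [MulAction G Y] [ContinuousSMul G Y]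
    (e : Equiv.Perm Y) (he : Continuous e) (he' : Continuous e.symm)
    (hequiv : ∀ (h : G) (x : Y), e (h • x) = h • e x)
    (g : G) (hg : IsCompact (closure ((Subgroup.zpowers g : Set G))))
    (n : ℤ) (hn : n ≠ 0)
    (hdisc : DiscreteTopology {x : Y | g⁻¹ • (e ^ n) x = x})
    (A : Set G) (hA : IsCompact A) (S : Set Y) (hS : IsCompact S) :
    {y : Y | g⁻¹ • (e ^ n) y = y ∧ ∃ a ∈ A, ∃ k : ℤ, a • (e ^ k) y ∈ S}.Finite := by
  -- continuity of all integer powers of `e`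
  have hpowc : ∀ (f : Equiv.Perm Y), Continuous ⇑f → ∀ m : ℕ, Continuous ⇑(f ^ m) := by
    intro f hf m
    induction m with
    | zero => simpa using continuous_id
    | succ m ih =>
      have h1 : ⇑(f ^ (m + 1)) = ⇑(f ^ m) ∘ ⇑f := by
        ext x; simp [pow_succ, Equiv.Perm.mul_apply]
      rw [h1]; exact ih.comp hf
  have hcont : ∀ k : ℤ, Continuous ⇑(e ^ k) := by
    intro k
    cases k with
    | ofNat m => simpa [zpow_natCast] using hpowc e he m
    | negSucc m =>
      have h1 : (e ^ (Int.negSucc m)) = (e⁻¹) ^ (m + 1) := by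
        rw [zpow_negSucc, inv_pow]
      rw [h1]
      exact hpowc e⁻¹ he' (m + 1)
  -- equivariance of all integer powers of `e`
  have hsymm : ∀ (h : G) (x : Y), e.symm (h • x) = h • e.symm x := by
    intro h x
    apply e.injective
    rw [Equiv.apply_symm_apply, hequiv, Equiv.apply_symm_apply]
  have hpoweq : ∀ (m : ℕ) (h : G) (x : Y), (e ^ m) (h • x) = h • (e ^ m) x := by
    intro m
    induction m with
    | zero => intro h x; simp
    | succ m ih => intro h x; simp [pow_succ, Equiv.Perm.mul_apply, hequiv, ih]
  have hpoweq' : ∀ (m : ℕ) (h : G) (x : Y), ((e⁻¹) ^ m) (h • x) = h • ((e⁻¹) ^ m) x := by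
    intro m
    induction m with
    | zero => intro h x; simp
    | succ m ih =>
      intro h x
      have h2 : (e⁻¹ : Equiv.Perm Y) (h • x) = h • (e⁻¹ : Equiv.Perm Y) x := hsymm h x
      simp only [pow_succ, Equiv.Perm.mul_apply, h2, ih]
  have hequiv' : ∀ (k : ℤ) (h : G) (x : Y), (e ^ k) (h • x) = h • (e ^ k) x := by
    intro k
    cases k with
    | ofNat m => simpa [zpow_natCast] using hpoweq m
    | negSucc m =>
      have h1 : (e ^ (Int.negSucc m)) = (e⁻¹) ^ (m + 1) := by
        rw [zpow_negSucc, inv_pow]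
      rw [h1]; exact hpoweq' (m + 1)
  -- the big compact set
  set C : Set G := closure ((Subgroup.zpowers g : Set G)) with hC
  set B : Set G := (A * C)⁻¹ with hB
  set K : Set Y := B • S with hKdef
  have hK : IsCompact K := ((hA.mul hg).inv).smul_set hS
  set T : Finset ℤ := (Finset.range n.natAbs).image (fun m : ℕ => (m : ℤ)) with hT
  set K' : Set Y := ⋃ r ∈ (T : Set ℤ), ⇑(e ^ (-r)) '' K with hK'
  have hK'c : IsCompact K' := T.finite_toSet.isCompact_biUnion
    (fun r _ => hK.image (hcont (-r)))
  -- F is closed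
  have hF : IsClosed {x : Y | g⁻¹ • (e ^ n) x = x} :=
    isClosed_eq ((hcont n).const_smul g⁻¹) continuous_id
  -- the target set is inside F ∩ K'
  have hsub : {y : Y | g⁻¹ • (e ^ n) y = y ∧ ∃ a ∈ A, ∃ k : ℤ, a • (e ^ k) y ∈ S}
      ⊆ {x : Y | g⁻¹ • (e ^ n) x = x} ∩ K' := by
    rintro y ⟨hy, a, ha, k, hk⟩
    refine ⟨hy, ?_⟩
    have hfix : (e ^ n) y = g • y := inv_smul_eq_iff.mp hy
    -- iteration: (e ^ (n * q)) y = g ^ q • y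
    have hiter : ∀ q : ℤ, (e ^ (n * q)) y = g ^ q • y := by
      intro q
      induction q using Int.induction_on with
      | zero => simp
      | succ q ih =>
        have h1 : n * ((q : ℤ) + 1) = n * q + n := by ring
        rw [h1, zpow_add, Equiv.Perm.mul_apply, hfix, hequiv', ih, smul_smul,
          ← zpow_one_add g]
        rw [add_comm]
      | pred q ih =>
        have hinj := (e ^ n).injective
        apply hinj
        have h1 : n * (-(q : ℤ) - 1) = -(n * q) - n := by ring
        have h2 : (e ^ n) ((e ^ (-(n * q) - n)) y) = (e ^ (-(n * q))) y := by
          rw [← Equiv.Perm.mul_apply, ← zpow_add]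
          congr 2
          ring
        have h3 : n * (-(q : ℤ)) = -(n * q) := by ring
        rw [h1, h2, ← h3, ih, hequiv', hfix, smul_smul, ← zpow_add_one g]
        norm_num
    -- decompose k
    obtain ⟨q, r, hk_eq, hr0, hrlt⟩ : ∃ q r : ℤ, k = r + n * q ∧ 0 ≤ r ∧ r < |n| :=
      ⟨k / n, k % n, by have := Int.mul_ediv_add_emod k n; omega,
        Int.emod_nonneg k hn, Int.emod_lt_abs k hn⟩
    rw [Int.abs_eq_natAbs] at hrlt
    have hky : (e ^ k) y = g ^ q • (e ^ r) y := by
      rw [hk_eq, zpow_add, Equiv.Perm.mul_apply, hiter, hequiv']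
    have hmemK : (e ^ r) y ∈ K := by
      have hmem : (a * g ^ q) • (e ^ r) y ∈ S := by
        rw [← smul_smul, ← hky]; exact hk
      refine ⟨(a * g ^ q)⁻¹, ?_, _, hmem, ?_⟩
      · rw [hB, Set.mem_inv, inv_inv]
        exact Set.mul_mem_mul ha (subset_closure ⟨q, rfl⟩)
      · simp [smul_smul, mul_assoc]
    have hrT : r ∈ (T : Set ℤ) := by
      simp only [hT, Finset.coe_image, Finset.coe_range, Set.mem_image, Set.mem_Iio]
      refine ⟨r.toNat, ?_, Int.toNat_of_nonneg hr0⟩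
      omega
    refine Set.mem_biUnion hrT ⟨(e ^ r) y, hmemK, ?_⟩
    rw [← Equiv.Perm.mul_apply, ← zpow_add]
    simp
  -- conclude
  have hcompact : IsCompact ({x : Y | g⁻¹ • (e ^ n) x = x} ∩ K') := hK'c.inter_left hF
  have hdisc2 : DiscreteTopology ({x : Y | g⁻¹ • (e ^ n) x = x} ∩ K' : Set Y) :=
    DiscreteTopology.of_subset hdisc Set.inter_subset_left
  exact (hcompact.finite (isDiscrete_iff_discreteTopology.mpr hdisc2)).subset hsub
end

section
/- Let G be a Hausdorff topological group acting continuously and properly on a Hausdorff topological space Y (properly meaning {h ∈ G : (h • K) ∩ K ≠ ∅} is compact for every compact K ⊆ Y). Let e : Y ≃ Y be a bijection with e(h • x) = h • e(x) for all h ∈ G, x ∈ Y, and let g ∈ G. Suppose that for some n ∈ ℤ with n ≠ 0, the fixed-point set F_n := {x ∈ Y : g⁻¹ • eⁿ(x) = x} is nonempty and contained in a compact subset B ⊆ Y. Then the centralizer Z := {z ∈ G : z g = g z} of g in G is compact. -/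
private lemma zpow_equivariant {Y G : Type*} [Group G] [MulAction G Y]
    (e : Equiv.Perm Y) (hequiv : ∀ (h : G) (x : Y), e (h • x) = h • e x) :
    ∀ (n : ℤ) (h : G) (x : Y), (e ^ n) (h • x) = h • (e ^ n) x := by
  have hsymm : ∀ (h : G) (x : Y), e.symm (h • x) = h • e.symm x := by
    intro h x
    apply e.injective
    rw [hequiv, Equiv.apply_symm_apply, Equiv.apply_symm_apply]
  intro n
  induction n using Int.induction_on with
  | zero => intro h x; simp
  | succ k ih =>
      intro h x
      have : e ^ ((k : ℤ) + 1) = e * e ^ (k : ℤ) := by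
        rw [add_comm, zpow_add, zpow_one]
      rw [this]
      simp only [Equiv.Perm.mul_apply]
      rw [ih, hequiv]
  | pred k ih =>
      intro h x
      have : e ^ (-(k : ℤ) - 1) = e⁻¹ * e ^ (-(k : ℤ)) := by
        rw [sub_eq_add_neg, add_comm, zpow_add, zpow_neg_one]
      rw [this]
      simp only [Equiv.Perm.mul_apply, Equiv.Perm.inv_def]
      rw [ih, hsymm]

/-- If `G` acts properly on `Y`, `e` is a `G`-equivariant bijection of `Y`, and for some
`n ≠ 0` the fixed-point set `Fₙ = {x | g⁻¹ • eⁿ x = x}` is nonempty and contained in a compact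
set `B`, then the centralizer of `g` in `G` is compact. -/
theorem centralizer_isCompact_of_fixed_points_in_compact
    {Y G : Type*} [Group G] [TopologicalSpace G] [IsTopologicalGroup G] [T2Space G]
    [TopologicalSpace Y] [T2Space Y] [MulAction G Y] [ContinuousSMul G Y]
    (hproper : ∀ K : Set Y, IsCompact K → IsCompact {h : G | ∃ x ∈ K, h • x ∈ K})
    (e : Equiv.Perm Y) (hequiv : ∀ (h : G) (x : Y), e (h • x) = h • e x)
    (g : G) (n : ℤ) (hn : n ≠ 0)
    (B : Set Y) (hB : IsCompact B)
    (hne : {x : Y | g⁻¹ • (e ^ n) x = x}.Nonempty)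
    (hsub : {x : Y | g⁻¹ • (e ^ n) x = x} ⊆ B) :
    IsCompact {z : G | z * g = g * z} := by
  obtain ⟨x₀, hx₀⟩ := hne
  have hclosed : IsClosed {z : G | z * g = g * z} :=
    isClosed_eq (by continuity) (by continuity)
  refine (hproper B hB).of_isClosed_subset hclosed ?_
  intro z hz
  refine ⟨x₀, hsub hx₀, ?_⟩
  apply hsub
  show g⁻¹ • (e ^ n) (z • x₀) = z • x₀
  simp only [Set.mem_setOf_eq] at hx₀ hz
  have hcomm : g⁻¹ * z = z * g⁻¹ :=
    (Commute.inv_left hz.symm).eq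
  rw [zpow_equivariant e hequiv n z x₀, smul_smul, hcomm, ← smul_smul, hx₀]
end

section
/- Let G be a Hausdorff topological group acting continuously and properly on a Hausdorff topological space Y (properly meaning {h ∈ G : (h • K) ∩ K ≠ ∅} is compact for every compact K ⊆ Y). Let e : Y ≃ Y be a bijection with e(h • x) = h • e(x) for all h ∈ G, x ∈ Y, and let g ∈ G be such that the closure of {gᵏ : k ∈ ℤ} in G is compact. Suppose there is a compact set B ⊆ Y such that F_n := {x ∈ Y : g⁻¹ • eⁿ(x) = x} ⊆ B for every n ∈ ℤ with n ≠ 0. Then for every compact set S ⊆ Y, the set {h ∈ G : ∃ n ∈ ℤ, n ≠ 0, ∃ y ∈ F_n, ∃ k ∈ ℤ, h • eᵏ(y) ∈ S} is contained in a compact subset of G (equivalently, has compact closure). -/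
/-- Suppose `G` acts properly on `Y`, `e` is a `G`-equivariant bijection of `Y`, the closure
of the cyclic subgroup generated by `g` is compact, and the fixed-point sets
`Fₙ = {x | g⁻¹ • eⁿ x = x}` for `n ≠ 0` are all contained in one compact set `B`. Then for
every compact `S ⊆ Y`, the set of `h ∈ G` such that `h • eᵏ y ∈ S` for some `n ≠ 0`,
`y ∈ Fₙ` and `k ∈ ℤ` is contained in a compact subset of `G`. -/
theorem group_elements_meeting_support_in_compact
    {Y G : Type*} [Group G] [TopologicalSpace G] [IsTopologicalGroup G] [T2Space G]
    [TopologicalSpace Y] [T2Space Y] [MulAction G Y] [ContinuousSMul G Y]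
    (hproper : ∀ K : Set Y, IsCompact K → IsCompact {h : G | ∃ x ∈ K, h • x ∈ K})
    (e : Equiv.Perm Y) (hequiv : ∀ (h : G) (x : Y), e (h • x) = h • e x)
    (g : G) (hg : IsCompact (closure ((Subgroup.zpowers g : Set G))))
    (B : Set Y) (hB : IsCompact B)
    (hsub : ∀ n : ℤ, n ≠ 0 → {x : Y | g⁻¹ • (e ^ n) x = x} ⊆ B)
    (S : Set Y) (hS : IsCompact S) :
    ∃ C : Set G, IsCompact C ∧
      {h : G | ∃ n : ℤ, n ≠ 0 ∧ ∃ y : Y, g⁻¹ • (e ^ n) y = y ∧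
        ∃ k : ℤ, h • (e ^ k) y ∈ S} ⊆ C := by
  -- inverse of e is equivariant
  have hinv : ∀ (h : G) (x : Y), e⁻¹ (h • x) = h • e⁻¹ x := by
    intro h x
    have := hequiv h (e⁻¹ x)
    rw [← Equiv.Perm.mul_apply e e⁻¹ x, mul_inv_cancel, Equiv.Perm.one_apply] at this
    rw [← this, ← Equiv.Perm.mul_apply e⁻¹ e, inv_mul_cancel, Equiv.Perm.one_apply]
  -- all integer powers of e are equivariant
  have hzequiv : ∀ (k : ℤ) (h : G) (x : Y), (e ^ k) (h • x) = h • (e ^ k) x := by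
    intro k
    induction k using Int.induction_on with
    | zero => simp
    | succ n ih =>
        intro h x
        rw [zpow_add_one, Equiv.Perm.mul_apply, Equiv.Perm.mul_apply, hequiv, ih]
    | pred n ih =>
        intro h x
        rw [zpow_sub_one, Equiv.Perm.mul_apply, Equiv.Perm.mul_apply, hinv, ih]
  refine ⟨{h : G | ∃ x ∈ B ∪ S, h • x ∈ B ∪ S}, hproper _ (hB.union hS), ?_⟩
  rintro h ⟨n, hn, y, hy, k, hk⟩
  refine ⟨(e ^ k) y, Or.inl (hsub n hn ?_), Or.inr hk⟩
  show g⁻¹ • (e ^ n) ((e ^ k) y) = (e ^ k) y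
  have hcomm : (e ^ n) ((e ^ k) y) = (e ^ k) ((e ^ n) y) := by
    rw [← Equiv.Perm.mul_apply, ← Equiv.Perm.mul_apply, ← zpow_add, ← zpow_add, add_comm]
  rw [hcomm, ← hzequiv k, hy]
end
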